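/- arXiv:1706.09423 — 7 statements merged into one kernel-verified Lean document; each statement's English description precedes it below -/
import Mathlib

section
/- Every d×d real symmetric matrix A that is entrywise nonnegative and diagonally dominant (A_{ii} ≥ Σ_{j≠i} A_{ij} for all i) is completely positive. -/
open Matrix

/-- A `d × d` real matrix is completely positive if `A = B * Bᵀ` for some
entrywise nonnegative `d × k` matrix `B` with `k ≥ 1`. -/
def IsCompletelyPositive {d : ℕ} (A : Matrix (Fin d) (Fin d) ℝ) : Prop :=
  ∃ (k : ℕ), 1 ≤ k ∧ ∃ B : Matrix (Fin d) (Fin k) ℝ,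
    (∀ i j, 0 ≤ B i j) ∧ A = B * Bᵀ

/-! Diagonal dominance lets one write
`A = diag(r) + ∑_{p ≠ q} (A p q / 2) • (e_p + e_q)(e_p + e_q)ᵀ` with
`r p = A p p - ∑_{q ≠ p} A p q ≥ 0`: by symmetry the pairs `(p, q)` and `(q, p)` each put
`A p q / 2` into the entry `(p, q)`, and each of them puts `A p q / 2` into both diagonal entries
`(p, p)` and `(q, q)`. The diagonal part is `D * Dᵀ` with `D = diag(√r)`, every other summand is
`w * wᵀ` for a nonnegative column `w`, and completely positive matrices are closed under sums:
place the factors side by side. -/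

namespace IsCompletelyPositive

variable {d : ℕ}

theorem of_mul_transpose {ι : Type*} [Fintype ι] (B : Matrix (Fin d) ι ℝ)
    (hB : ∀ i j, 0 ≤ B i j) : IsCompletelyPositive (B * Bᵀ) := by
  -- a zero column makes the column index nonempty, as the definition requires `1 ≤ k`
  let B' : Matrix (Fin d) (ι ⊕ Unit) ℝ := fromCols B 0
  let e := Fintype.equivFin (ι ⊕ Unit)
  have hB' : ∀ i j, 0 ≤ B' i j := by rintro i (j | j) <;> simp [B', hB]
  refine ⟨Fintype.card (ι ⊕ Unit), Fintype.card_pos, B'.submatrix id e.symm,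
    fun i j => hB' i _, ?_⟩
  rw [transpose_submatrix, submatrix_mul_equiv, submatrix_id_id, transpose_fromCols,
    fromCols_mul_fromRows, transpose_zero, Matrix.zero_mul, add_zero]

theorem zero : IsCompletelyPositive (0 : Matrix (Fin d) (Fin d) ℝ) := by
  simpa using of_mul_transpose (0 : Matrix (Fin d) (Fin 0) ℝ) fun _ _ => le_rfl

theorem add {A A' : Matrix (Fin d) (Fin d) ℝ} (hA : IsCompletelyPositive A)
    (hA' : IsCompletelyPositive A') : IsCompletelyPositive (A + A') := by
  obtain ⟨k, -, B, hB, rfl⟩ := hA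
  obtain ⟨k', -, B', hB', rfl⟩ := hA'
  simpa [transpose_fromCols, fromCols_mul_fromRows] using
    of_mul_transpose (fromCols B B') (by rintro i (j | j) <;> simp [hB, hB'])

theorem sum {ι : Type*} (s : Finset ι) {A : ι → Matrix (Fin d) (Fin d) ℝ}
    (hA : ∀ i ∈ s, IsCompletelyPositive (A i)) : IsCompletelyPositive (∑ i ∈ s, A i) :=
  Finset.sum_induction A _ (fun _ _ => add) zero hA

theorem diagonal {r : Fin d → ℝ} (hr : ∀ i, 0 ≤ r i) : IsCompletelyPositive (diagonal r) := by
  have h := of_mul_transpose (Matrix.diagonal fun i => √(r i)) fun i j => by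
    rw [diagonal_apply]; split_ifs <;> positivity
  simpa only [diagonal_transpose, diagonal_mul_diagonal, Real.mul_self_sqrt (hr _)] using h

theorem smul_vecMulVec {a : ℝ} (ha : 0 ≤ a) {v : Fin d → ℝ} (hv : 0 ≤ v) :
    IsCompletelyPositive (a • vecMulVec v v) := by
  have h := of_mul_transpose (replicateCol Unit (√a • v)) fun i _ => by
    simpa using mul_nonneg (Real.sqrt_nonneg a) (hv i)
  rwa [transpose_replicateCol, ← vecMulVec_eq, Matrix.smul_vecMulVec, vecMulVec_smul, smul_smul,
    Real.mul_self_sqrt ha] at h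

end IsCompletelyPositive

theorem Matrix.sum_smul_vecMulVec_single_add_single {n R : Type*} [Fintype n] [DecidableEq n]
    [CommSemiring R] (c : Matrix n n R) :
    ∑ p, ∑ q, c p q • vecMulVec (Pi.single p 1 + Pi.single q 1) (Pi.single p 1 + Pi.single q 1)
      = diagonal (fun p => ∑ q, c p q) + diagonal (fun q => ∑ p, c p q) + c + cᵀ := by
  ext i j
  simp only [sum_apply, smul_apply, vecMulVec_apply, Pi.add_apply, Pi.single_apply, mul_add,
    mul_ite, mul_one, mul_zero, smul_eq_mul, Finset.sum_add_distrib, Finset.sum_ite_irrel,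
    Finset.sum_const_zero, Finset.sum_ite_eq, Finset.mem_univ, ↓reduceIte, diagonal_add, add_apply,
    diagonal_apply, transpose_apply]
  split_ifs with hij
  · subst hij; ring
  · ring

theorem Matrix.IsSymm.eq_diagonal_add_sum_smul_vecMulVec {n R : Type*} [Fintype n]
    [DecidableEq n] [Field R] [NeZero (2 : R)] {A : Matrix n n R} (hA : A.IsSymm) :
    A = diagonal (fun p => A p p - ∑ q ∈ Finset.univ.erase p, A p q) +
      ∑ p, ∑ q, (if p = q then 0 else A p q / 2) •
        vecMulVec (Pi.single p 1 + Pi.single q 1) (Pi.single p 1 + Pi.single q 1) := by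
  set c : Matrix n n R := fun p q => if p = q then 0 else A p q / 2 with hc
  have hA' : ∀ p q, A q p = A p q := fun p q => hA.apply p q
  have hc_diag : ∀ p, c p p = 0 := fun p => if_pos rfl
  have hc_offDiag : ∀ {p q}, p ≠ q → c p q = A p q / 2 := fun h => if_neg h
  have hc_symm : ∀ p q, c q p = c p q := fun p q => by simp only [hc, eq_comm, hA']
  have hc_row : ∀ p, ∑ q, c p q = (∑ q ∈ Finset.univ.erase p, A p q) / 2 := fun p => by
    rw [← Finset.add_sum_erase _ _ (Finset.mem_univ p), hc_diag, zero_add, Finset.sum_div]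
    exact Finset.sum_congr rfl fun q hq => hc_offDiag (Finset.ne_of_mem_erase hq).symm
  show A = _ + ∑ p, ∑ q, c p q • _
  clear_value c
  rw [sum_smul_vecMulVec_single_add_single c]
  ext i j
  simp only [add_apply, diagonal_apply, transpose_apply]
  rcases eq_or_ne i j with rfl | hij
  · simp only [↓reduceIte, hc_diag, add_zero, hc_symm i, hc_row, add_halves, sub_add_cancel]
  · simp only [if_neg hij, zero_add, hc_offDiag hij, hc_offDiag hij.symm, hA' i j, add_halves]

theorem diagonally_dominant_nonneg_is_cp {d : ℕ} (A : Matrix (Fin d) (Fin d) ℝ)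
    (hsymm : A.IsSymm) (hnonneg : ∀ i j, 0 ≤ A i j)
    (hdd : ∀ i, ∑ j ∈ Finset.univ.erase i, A i j ≤ A i i) :
    IsCompletelyPositive A := by
  rw [hsymm.eq_diagonal_add_sum_smul_vecMulVec]
  refine .add (.diagonal fun p => sub_nonneg.2 (hdd p)) (.sum _ fun p _ => .sum _ fun q _ => ?_)
  refine .smul_vecMulVec ?_ (add_nonneg (Pi.single_nonneg.2 zero_le_one)
    (Pi.single_nonneg.2 zero_le_one))
  split_ifs
  exacts [le_rfl, div_nonneg (hnonneg p q) zero_le_two]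
end

section
/- Every 3×3 real symmetric doubly nonnegative matrix is completely positive. -/
/-!
Eliminating a pivot `p` from a positive semidefinite matrix writes `A = u uᵀ + S` with
`u = A p / √(A p p)`; the Schur complement `S` is again positive semidefinite, its `p`-th row
vanishes, and `S q r = A q r - A p q * A p r / A p p`. In dimension three, choose `p` with
`A p q * A p r ≤ A p p * A q r` for the other two indices `q, r`: then `S` stays entrywise
nonnegative, and two more eliminations exhaust it, so `A` is a sum of three rank-one matrices
`u uᵀ` with `u ≥ 0`. Such a pivot exists, since if all three choices failed, multiplying the three
strict inequalities would give `A 0 0 * A 1 1 * A 2 2 < A 0 1 * A 0 2 * A 1 2`, against the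
`2 × 2` minor bounds `A i j ^ 2 ≤ A i i * A j j`.
-/

open Matrix

namespace Matrix

variable {n : Type*}

/- When `A i i = 0` this is `0` (as `√0 = 0` and `0⁻¹ = 0`), and for positive semidefinite `A`
the row `A i` vanishes as well, so no case split on the pivot is needed below. -/
noncomputable def pivotVec (A : Matrix n n ℝ) (i : n) : n → ℝ := (√(A i i))⁻¹ • A i

noncomputable def schurStep (A : Matrix n n ℝ) (i : n) : Matrix n n ℝ :=
  A - vecMulVec (A.pivotVec i) (A.pivotVec i)

lemma PosSemidef.apply_comm {A : Matrix n n ℝ} (hA : A.PosSemidef) (i j : n) : A i j = A j i := by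
  simpa using (hA.isHermitian.apply i j).symm

lemma schurStep_apply {A : Matrix n n ℝ} {i : n} (hi : 0 ≤ A i i) (j k : n) :
    A.schurStep i j k = A j k - A i j * A i k / A i i := by
  simp only [schurStep, pivotVec, sub_apply, vecMulVec_apply, Pi.smul_apply, smul_eq_mul]
  rw [mul_mul_mul_comm, ← sq, inv_pow, Real.sq_sqrt hi, div_eq_inv_mul]

theorem PosSemidef.schurStep [Fintype n] {A : Matrix n n ℝ} (hA : A.PosSemidef) (i : n) :
    (A.schurStep i).PosSemidef := by
  classical
  have hu : (vecMulVec (A.pivotVec i) (A.pivotVec i)).IsHermitian := by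
    simpa using (posSemidef_vecMulVec_self_star (A.pivotVec i)).isHermitian
  refine .of_dotProduct_mulVec_nonneg (hA.isHermitian.sub hu) fun x => ?_
  set s := (A *ᵥ x) i with hs
  have hx : star x ⬝ᵥ (A.schurStep i *ᵥ x) = x ⬝ᵥ (A *ᵥ x) - s ^ 2 / A i i := by
    have hux : A.pivotVec i ⬝ᵥ x = (√(A i i))⁻¹ * s := by
      simp [pivotVec, s, mulVec, dotProduct_comm]
    rw [star_trivial, Matrix.schurStep, sub_mulVec, vecMulVec_mulVec, dotProduct_sub,
      dotProduct_smul, dotProduct_comm x (A.pivotVec i), hux, op_smul_eq_smul, smul_eq_mul, ← sq,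
      mul_pow, inv_pow, Real.sq_sqrt hA.diag_nonneg, inv_mul_eq_div]
  have hcol : x ⬝ᵥ (A *ᵥ Pi.single i 1) = s := by
    rw [mulVec_single_one, dotProduct_comm]
    simp [s, mulVec, dotProduct, hA.apply_comm i]
  have hy : x ⬝ᵥ (A *ᵥ x) - s ^ 2 / A i i =
      star (x - (s / A i i) • Pi.single i 1) ⬝ᵥ (A *ᵥ (x - (s / A i i) • Pi.single i 1)) := by
    rw [star_trivial, mulVec_sub, mulVec_smul, sub_dotProduct, dotProduct_sub, dotProduct_sub,
      smul_dotProduct, smul_dotProduct, dotProduct_smul, dotProduct_smul, hcol,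
      single_one_dotProduct, single_one_dotProduct, mulVec_single_one]
    rcases eq_or_ne (A i i) 0 with h | h
    · simp [h]
    · simp only [← hs, col_apply, smul_eq_mul]
      field_simp
      ring
  rw [hx, hy]
  exact hA.dotProduct_mulVec_nonneg _

lemma PosSemidef.sq_apply_le {A : Matrix n n ℝ} (hA : A.PosSemidef) (i j : n) :
    A i j ^ 2 ≤ A i i * A j j := by
  have := (hA.submatrix ![i, j]).det_nonneg
  rw [det_fin_two] at this
  simp only [submatrix_apply, Matrix.cons_val_zero, Matrix.cons_val_one] at this
  rw [hA.apply_comm j i, ← sq] at this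
  linarith

lemma PosSemidef.apply_eq_zero_of_diag_eq_zero {A : Matrix n n ℝ} (hA : A.PosSemidef) {i : n}
    (hi : A i i = 0) (j : n) : A i j = 0 := by
  have := hA.sq_apply_le i j
  rw [hi, zero_mul] at this
  exact pow_eq_zero_iff two_ne_zero |>.1 (le_antisymm this (sq_nonneg _))

lemma PosSemidef.schurStep_self_eq_zero {A : Matrix n n ℝ} (hA : A.PosSemidef) (i : n) :
    A.schurStep i i = 0 := by
  ext k
  rw [schurStep_apply hA.diag_nonneg]
  rcases eq_or_ne (A i i) 0 with h | h
  · simp [h, hA.apply_eq_zero_of_diag_eq_zero h k]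
  · simp [mul_div_cancel_left₀ _ h]

lemma PosSemidef.schurStep_eq_zero_of_eq_zero {A : Matrix n n ℝ} (hA : A.PosSemidef) (i : n)
    {k : n} (hk : A k = 0) : A.schurStep i k = 0 := by
  ext j
  rw [schurStep_apply hA.diag_nonneg, hA.apply_comm i k]
  simp [hk]

lemma pivotVec_nonneg {A : Matrix n n ℝ} {i : n} (h : 0 ≤ A i) : 0 ≤ A.pivotVec i :=
  smul_nonneg (inv_nonneg.2 (Real.sqrt_nonneg _)) h

lemma vecMulVec_pivotVec_add_schurStep (A : Matrix n n ℝ) (i : n) :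
    vecMulVec (A.pivotVec i) (A.pivotVec i) + A.schurStep i = A :=
  add_sub_cancel _ _

end Matrix

lemma isCompletelyPositive_vecMulVec_self {d : ℕ} {v : Fin d → ℝ} (hv : 0 ≤ v) :
    IsCompletelyPositive (vecMulVec v v) :=
  ⟨1, le_rfl, replicateCol (Fin 1) v, fun i _ => hv i, by
    rw [transpose_replicateCol]; exact vecMulVec_eq (Fin 1) v v⟩

lemma IsCompletelyPositive.add_s3 {d : ℕ} {A B : Matrix (Fin d) (Fin d) ℝ}
    (hA : IsCompletelyPositive A) (hB : IsCompletelyPositive B) : IsCompletelyPositive (A + B) := by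
  obtain ⟨k, hk, C, hC, rfl⟩ := hA
  obtain ⟨l, -, D, hD, rfl⟩ := hB
  refine ⟨k + l, by omega, of fun i => Fin.append (C i) (D i), fun i j => ?_, ?_⟩
  · refine Fin.addCases (fun j => ?_) (fun j => ?_) j <;> simp [hC, hD]
  · ext i j
    simp [mul_apply, Fin.sum_univ_add]

lemma isCompletelyPositive_zero {d : ℕ} : IsCompletelyPositive (0 : Matrix (Fin d) (Fin d) ℝ) :=
  ⟨1, le_rfl, 0, fun _ _ => le_rfl, by simp⟩

lemma IsCompletelyPositive.of_schurStep {d : ℕ} {A : Matrix (Fin d) (Fin d) ℝ} {i : Fin d}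
    (hrow : 0 ≤ A i) (h : IsCompletelyPositive (A.schurStep i)) : IsCompletelyPositive A := by
  rw [← A.vecMulVec_pivotVec_add_schurStep i]
  exact (isCompletelyPositive_vecMulVec_self (pivotVec_nonneg hrow)).add_s3 h

theorem isCompletelyPositive_of_pivot {d : ℕ} {A : Matrix (Fin d) (Fin d) ℝ} (hA : A.PosSemidef)
    (hA₀ : ∀ i j, 0 ≤ A i j) {p q r : Fin d} (hcover : ∀ j, j = p ∨ j = q ∨ j = r)
    (hpivot : A p q * A p r ≤ A p p * A q r) : IsCompletelyPositive A := by
  set A₁ := A.schurStep p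
  set A₂ := A₁.schurStep q
  have hA₁ : A₁.PosSemidef := hA.schurStep p
  have hA₂ : A₂.PosSemidef := hA₁.schurStep q
  have h₁p : A₁ p = 0 := hA.schurStep_self_eq_zero p
  have h₂p : A₂ p = 0 := hA₁.schurStep_eq_zero_of_eq_zero q h₁p
  have h₂q : A₂ q = 0 := hA₁.schurStep_self_eq_zero q
  have h₃ : A₂.schurStep r = 0 := by
    ext j k
    rcases hcover j with rfl | rfl | rfl
    · exact congrFun (hA₂.schurStep_eq_zero_of_eq_zero r h₂p) k
    · exact congrFun (hA₂.schurStep_eq_zero_of_eq_zero r h₂q) k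
    · exact congrFun (hA₂.schurStep_self_eq_zero j) k
  have hrow₁ : 0 ≤ A₁ q := by
    intro j
    rcases hcover j with rfl | rfl | rfl
    · simp [hA₁.apply_comm q, h₁p]
    · exact hA₁.diag_nonneg
    · change 0 ≤ A.schurStep p q j
      rw [schurStep_apply hA.diag_nonneg, sub_nonneg]
      exact div_le_of_le_mul₀ hA.diag_nonneg (hA₀ _ _) (by linarith)
  have hrow₂ : 0 ≤ A₂ r := by
    intro j
    rcases hcover j with rfl | rfl | rfl
    · simp [hA₂.apply_comm r, h₂p]
    · simp [hA₂.apply_comm r, h₂q]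
    · exact hA₂.diag_nonneg
  refine .of_schurStep (hA₀ p) (.of_schurStep hrow₁ (.of_schurStep hrow₂ ?_))
  rw [h₃]
  exact isCompletelyPositive_zero

lemma le_or_le_or_le_of_sq_le {a b c d e f : ℝ} (ha : 0 ≤ a) (hb : 0 ≤ b) (hc : 0 ≤ c)
    (hd : 0 ≤ d) (he : 0 ≤ e) (hf : 0 ≤ f)
    (hab : b ^ 2 ≤ a * d) (hac : c ^ 2 ≤ a * f) (hae : e ^ 2 ≤ d * f) :
    b * c ≤ a * e ∨ b * e ≤ d * c ∨ c * e ≤ f * b := by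
  by_contra! h
  obtain ⟨h₀, h₁, h₂⟩ := h
  have hP : 0 < b * c * e := by
    have hbc : 0 < b * c := by nlinarith
    have hbe : 0 < b * e := by nlinarith
    nlinarith
  have hlt : a * d * f * (b * c * e) < (b * c * e) ^ 2 := by
    have := mul_lt_mul'' (mul_lt_mul'' h₀ h₁ (by positivity) (by positivity)) h₂
      (by positivity) (by positivity)
    linarith
  have hle : (b * c * e) ^ 2 ≤ (a * d * f) ^ 2 := by
    have := mul_le_mul (mul_le_mul hab hac (by positivity) (by positivity)) hae
      (by positivity) (by positivity)
    linarith
  have hD : a * d * f < b * c * e := lt_of_mul_lt_mul_right (by linarith) hP.le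
  have := pow_lt_pow_left₀ hD (by positivity) two_ne_zero
  linarith

lemma exists_pivot_fin_three {A : Matrix (Fin 3) (Fin 3) ℝ} (hA : A.PosSemidef)
    (hA₀ : ∀ i j, 0 ≤ A i j) :
    A 0 1 * A 0 2 ≤ A 0 0 * A 1 2 ∨ A 1 0 * A 1 2 ≤ A 1 1 * A 0 2 ∨
      A 2 0 * A 2 1 ≤ A 2 2 * A 0 1 := by
  rw [hA.apply_comm 1 0, hA.apply_comm 2 0, hA.apply_comm 2 1]
  exact le_or_le_or_le_of_sq_le (hA₀ 0 0) (hA₀ 0 1) (hA₀ 0 2) (hA₀ 1 1) (hA₀ 1 2) (hA₀ 2 2)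
    (hA.sq_apply_le 0 1) (hA.sq_apply_le 0 2) (hA.sq_apply_le 1 2)

theorem dnn3_is_cp_general (A : Matrix (Fin 3) (Fin 3) ℝ)
    (hpsd : A.PosSemidef) (hnonneg : ∀ i j, 0 ≤ A i j) :
    IsCompletelyPositive A := by
  rcases exists_pivot_fin_three hpsd hnonneg with h | h | h
  · exact isCompletelyPositive_of_pivot hpsd hnonneg (p := 0) (q := 1) (r := 2) (by decide) h
  · exact isCompletelyPositive_of_pivot hpsd hnonneg (p := 1) (q := 0) (r := 2) (by decide) h
  · exact isCompletelyPositive_of_pivot hpsd hnonneg (p := 2) (q := 0) (r := 1) (by decide) h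

theorem dnn3_is_cp (A : Matrix (Fin 3) (Fin 3) ℝ)
    (hsymm : A.IsSymm) (hpsd : A.PosSemidef) (hnonneg : ∀ i j, 0 ≤ A i j) :
    IsCompletelyPositive A :=
  dnn3_is_cp_general A hpsd hnonneg
end

section
/- Let A be a d×d doubly nonnegative matrix of rank at most 2. Then A is completely positive. -/
/-!
A positive semidefinite matrix of rank at most `2` is the Gram matrix `A i j = ⟪z i, z j⟫` of
vectors `z i` in `ℂ ≃ ℝ²`. Nonnegative entries mean that these vectors make pairwise angles of at
most `π / 2`. Rotate them into the right half-plane, then rotate the one of least argument onto the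
positive real axis: all of them now lie in the closed first quadrant, and the coordinates of the
rotated vectors form a nonnegative factor of `A`.
-/

open Matrix

open Complex ComplexConjugate
open scoped InnerProductSpace ComplexOrder

namespace Matrix

variable {m ι κ α : Type*} [Fintype ι] [Fintype κ]

theorem exists_mul_conjTranspose_eq_of_card_le [Semiring α] [StarRing α] [DecidableEq κ]
    (C : Matrix m ι α) (h : Fintype.card ι ≤ Fintype.card κ) :
    ∃ B : Matrix m κ α, B * Bᴴ = C * Cᴴ := by
  obtain ⟨f⟩ := Function.Embedding.nonempty_of_card_le h
  classical
  set P : Matrix ι κ α := (1 : Matrix κ κ α).submatrix f id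
  have hP : P * Pᴴ = 1 := by
    rw [conjTranspose_submatrix, conjTranspose_one,
      ← submatrix_mul _ _ _ _ _ Function.bijective_id, mul_one, submatrix_one_embedding]
  exact ⟨C * P, by
    rw [conjTranspose_mul, Matrix.mul_assoc, ← Matrix.mul_assoc P, hP, Matrix.one_mul]⟩

theorem submatrix_mul_conjTranspose_submatrix_of_eq_zero [Semiring α] [StarRing α]
    (C : Matrix m ι α) {p : ι → Prop} [DecidablePred p] (hC : ∀ i j, ¬ p j → C i j = 0) :
    C.submatrix id ((↑) : Subtype p → ι) * (C.submatrix id ((↑) : Subtype p → ι))ᴴ =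
      C * Cᴴ := by
  ext i i'
  simp only [mul_apply, submatrix_apply, conjTranspose_apply, id]
  exact Fintype.sum_of_injective _ Subtype.val_injective _ _
    (fun j hj => by simp [hC i j fun hp => hj ⟨⟨j, hp⟩, rfl⟩]) fun _ => rfl

theorem PosSemidef.exists_eq_mul_conjTranspose_of_rank_le {𝕜 : Type*} [RCLike 𝕜] [Fintype m]
    [DecidableEq m] [DecidableEq κ] {A : Matrix m m 𝕜} (hA : A.PosSemidef)
    (h : A.rank ≤ Fintype.card κ) :
    ∃ B : Matrix m κ 𝕜, A = B * Bᴴ := by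
  set U : Matrix m m 𝕜 := ↑hA.isHermitian.eigenvectorUnitary
  set D : Matrix m m 𝕜 := diagonal fun j => (√(hA.isHermitian.eigenvalues j) : 𝕜)
  have hD : diagonal (RCLike.ofReal ∘ hA.isHermitian.eigenvalues) = D * Dᴴ := by
    rw [diagonal_conjTranspose, diagonal_mul_diagonal]
    congr with j
    simp [← RCLike.ofReal_mul, Real.mul_self_sqrt (hA.eigenvalues_nonneg j)]
  have hA_eq : A = (U * D) * (U * D)ᴴ := by
    conv_lhs => rw [hA.isHermitian.spectral_theorem, Unitary.conjStarAlgAut_apply, hD]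
    simp only [U, conjTranspose_mul, star_eq_conjTranspose, Matrix.mul_assoc]
  have hzero : ∀ i j, ¬ hA.isHermitian.eigenvalues j ≠ 0 → (U * D) i j = 0 := fun i j hj => by
    simp [D, not_not.mp hj]
  obtain ⟨B, hB⟩ := ((U * D).submatrix id ((↑) : {j // hA.isHermitian.eigenvalues j ≠ 0} → m))
    |>.exists_mul_conjTranspose_eq_of_card_le (κ := κ)
      (hA.isHermitian.rank_eq_card_non_zero_eigs ▸ h)
  rw [submatrix_mul_conjTranspose_submatrix_of_eq_zero _ hzero] at hB
  exact ⟨B, hA_eq.trans hB.symm⟩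

end Matrix

def Complex.reImMatrix {ι : Type*} (z : ι → ℂ) : Matrix ι (Fin 2) ℝ :=
  of fun i => ![(z i).re, (z i).im]

theorem Complex.reImMatrix_mul_transpose_apply {ι : Type*} (z : ι → ℂ) (i j : ι) :
    (reImMatrix z * (reImMatrix z)ᵀ) i j = ⟪z i, z j⟫_ℝ := by
  simp [reImMatrix, mul_apply, Fin.sum_univ_two, Complex.inner]
  ring

theorem Complex.im_conj_mul_nonneg_of_arg_le {a b : ℂ} (ha : 0 ≤ a.re) (hb : 0 ≤ b.re)
    (hab : arg a ≤ arg b) : 0 ≤ (conj a * b).im := by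
  have hpolar : (conj a * b).im = ‖a‖ * ‖b‖ * Real.sin (arg b - arg a) := by
    rw [Real.sin_sub, mul_im, conj_re, conj_im, ← norm_mul_cos_arg a, ← norm_mul_sin_arg a,
      ← norm_mul_cos_arg b, ← norm_mul_sin_arg b]
    ring
  have ha' := abs_le.mp (abs_arg_le_pi_div_two_iff.mpr ha)
  have hb' := abs_le.mp (abs_arg_le_pi_div_two_iff.mpr hb)
  rw [hpolar]
  exact mul_nonneg (by positivity)
    (Real.sin_nonneg_of_nonneg_of_le_pi (by linarith) (by linarith))

noncomputable def Circle.ofConjDivNorm (u : ℂ) (hu : u ≠ 0) : Circle :=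
  ⟨conj u / ‖u‖, mem_sphere_zero_iff_norm.2 <| by simp [hu]⟩

namespace Circle

theorem ofConjDivNorm_mul (u : ℂ) (hu : u ≠ 0) (v : ℂ) :
    (ofConjDivNorm u hu : ℂ) * v = conj u * v / ‖u‖ :=
  div_mul_eq_mul_div _ _ _

theorem re_ofConjDivNorm_mul (u : ℂ) (hu : u ≠ 0) (v : ℂ) :
    ((ofConjDivNorm u hu : ℂ) * v).re = ⟪u, v⟫_ℝ / ‖u‖ := by
  rw [ofConjDivNorm_mul, div_ofReal_re, Complex.inner, mul_comm]

theorem im_ofConjDivNorm_mul (u : ℂ) (hu : u ≠ 0) (v : ℂ) :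
    ((ofConjDivNorm u hu : ℂ) * v).im = (conj u * v).im / ‖u‖ := by
  rw [ofConjDivNorm_mul, div_ofReal_im]

end Circle

namespace Complex

variable {ι : Type*} [Fintype ι]

theorem exists_circle_mul_mem_quadrant_of_re_nonneg {y : ι → ℂ} (hy : ∃ k, y k ≠ 0)
    (hre : ∀ i, 0 ≤ (y i).re) (hinner : ∀ i j, 0 ≤ ⟪y i, y j⟫_ℝ) :
    ∃ a : Circle, ∀ i, 0 ≤ (a * y i).re ∧ 0 ≤ (a * y i).im := by
  obtain ⟨m, hm, hmin⟩ := (Finset.univ.filter (y · ≠ 0)).exists_min_image (fun i => arg (y i))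
    (by simpa [Finset.Nonempty] using hy)
  have hm : y m ≠ 0 := by simpa using hm
  refine ⟨Circle.ofConjDivNorm (y m) hm, fun i => ⟨?_, ?_⟩⟩
  · rw [Circle.re_ofConjDivNorm_mul]
    exact div_nonneg (hinner m i) (norm_nonneg _)
  · rw [Circle.im_ofConjDivNorm_mul]
    refine div_nonneg ?_ (norm_nonneg _)
    by_cases hi : y i = 0
    · simp [hi]
    exact im_conj_mul_nonneg_of_arg_le (hre m) (hre i) (hmin i (by simpa using hi))

theorem exists_circle_mul_mem_quadrant {z : ι → ℂ} (hinner : ∀ i j, 0 ≤ ⟪z i, z j⟫_ℝ) :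
    ∃ a : Circle, ∀ i, 0 ≤ (a * z i).re ∧ 0 ≤ (a * z i).im := by
  by_cases hz : ∃ k, z k ≠ 0
  swap
  · exact ⟨1, fun i => by simp [not_exists_not.mp hz i]⟩
  obtain ⟨k, hk⟩ := hz
  set b := Circle.ofConjDivNorm (z k) hk
  obtain ⟨a, ha⟩ := exists_circle_mul_mem_quadrant_of_re_nonneg (y := fun i => b * z i)
    ⟨k, mul_ne_zero b.coe_ne_zero hk⟩
    (fun i => by rw [Circle.re_ofConjDivNorm_mul]; exact div_nonneg (hinner k i) (norm_nonneg _))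
    (fun i j => (hinner i j).trans_eq ((rotation b).inner_map_map (z i) (z j)).symm)
  exact ⟨a * b, fun i => by simpa [mul_assoc] using ha i⟩

end Complex

theorem dnn_rank_le_two_is_cp {d : ℕ} (A : Matrix (Fin d) (Fin d) ℝ)
    (hpsd : A.PosSemidef) (hnonneg : ∀ i j, 0 ≤ A i j)
    (hrank : A.rank ≤ 2) :
    IsCompletelyPositive A := by
  obtain ⟨B, hB⟩ := hpsd.exists_eq_mul_conjTranspose_of_rank_le (κ := Fin 2) (by simpa using hrank)
  set z : Fin d → ℂ := fun i => ⟨B i 0, B i 1⟩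
  have hBz : B = Complex.reImMatrix z := by
    ext i c
    fin_cases c <;> rfl
  have hgram : ∀ i j, A i j = ⟪z i, z j⟫_ℝ := fun i j => by
    rw [hB, conjTranspose_eq_transpose_of_trivial, hBz, Complex.reImMatrix_mul_transpose_apply]
  obtain ⟨a, ha⟩ := Complex.exists_circle_mul_mem_quadrant fun i j => hgram i j ▸ hnonneg i j
  refine ⟨2, one_le_two, Complex.reImMatrix fun i => a * z i, fun i c => ?_, ?_⟩
  · fin_cases c
    exacts [(ha i).1, (ha i).2]
  · ext i j
    rw [Complex.reImMatrix_mul_transpose_apply, hgram]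
    exact ((rotation a).inner_map_map (z i) (z j)).symm
end

section
/- The Horn matrix H, the 5×5 symmetric matrix with H_{ii}=1 and off-diagonal pattern H = [[1,−1,1,1,−1],[−1,1,−1,1,1],[1,−1,1,−1,1],[1,1,−1,1,−1],[−1,1,1,−1,1]], is copositive: xᵀHx ≥ 0 for every vector x ∈ ℝ⁵ with nonnegative entries. -/
/-!
The Horn form is a square plus `4 x₁ x₃ + 4 x₂ (x₄ - x₃)`, and, with the roles of `x₃` and `x₄`
swapped, also a square plus `4 x₁ x₄ + 4 x₀ (x₃ - x₄)`. On the nonnegative orthant every term of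
the first decomposition is nonnegative when `x₃ ≤ x₄`, and every term of the second when `x₄ ≤ x₃`.
-/

open Matrix

/-- The Horn matrix. -/
def hornMatrix : Matrix (Fin 5) (Fin 5) ℝ :=
  !![1, -1, 1, 1, -1;
     -1, 1, -1, 1, 1;
     1, -1, 1, -1, 1;
     1, 1, -1, 1, -1;
     -1, 1, 1, -1, 1]

theorem dotProduct_hornMatrix_mulVec (x : Fin 5 → ℝ) :
    x ⬝ᵥ hornMatrix *ᵥ x =
      (x 0 - x 1 + x 2 + x 3 - x 4) ^ 2 + 4 * (x 1 * x 3) + 4 * (x 2 * (x 4 - x 3)) := by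
  simp only [hornMatrix, dotProduct, mulVec, Fin.sum_univ_five, of_apply, cons_val,
    cons_val_zero, cons_val_one]
  ring

theorem dotProduct_hornMatrix_mulVec' (x : Fin 5 → ℝ) :
    x ⬝ᵥ hornMatrix *ᵥ x =
      (x 0 - x 1 + x 2 - x 3 + x 4) ^ 2 + 4 * (x 1 * x 4) + 4 * (x 0 * (x 3 - x 4)) := by
  rw [dotProduct_hornMatrix_mulVec]
  ring

theorem hornMatrix_copositive (x : Fin 5 → ℝ) (hx : ∀ i, 0 ≤ x i) :
    0 ≤ x ⬝ᵥ hornMatrix.mulVec x := by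
  rcases le_total (x 3) (x 4) with h | h
  · rw [dotProduct_hornMatrix_mulVec]
    linarith [sq_nonneg (x 0 - x 1 + x 2 + x 3 - x 4), mul_nonneg (hx 1) (hx 3),
      mul_nonneg (hx 2) (sub_nonneg.2 h)]
  · rw [dotProduct_hornMatrix_mulVec']
    linarith [sq_nonneg (x 0 - x 1 + x 2 - x 3 + x 4), mul_nonneg (hx 1) (hx 4),
      mul_nonneg (hx 0) (sub_nonneg.2 h)]
end

section
/- Let x ∈ ℝ^d with all x_i ≥ 0 and ‖x‖₁ > 0, and let e_x(φ) = Σ_j √(x_j/‖x‖₁) e^{iφ_j}|j⟩. Then (1/(2π)^d) ∫_{[0,2π]^d} (|e_x(φ)⟩⟨e_x(φ)|)^{⊗2} dφ = (1/‖x‖₁²)[ Σ_i x_i² |ii⟩⟨ii| + Σ_{i<j} 2 x_i x_j |D_{ij}⟩⟨D_{ij}| ], where |D_{ij}⟩ = (|ij⟩+|ji⟩)/√2. In particular this operator is a separable quantum state. -/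
open MeasureTheory Real

/-! The phase `φ_i + φ_j - φ_k - φ_l` is `∑ m, c m * φ m` for the integer vector
`c = e_i + e_j - e_k - e_l`, so the integrand is a constant times the product of the
one-dimensional characters `exp (I * c m * φ m)`. By Fubini the integral is `(2π)^d` if `c = 0`
and `0` otherwise, and `c = 0` exactly when `{i, j} = {k, l}` as multisets; in that case the
constant `√(x_i x_j x_k x_l) / ‖x‖₁²` is `x_i x_j / ‖x‖₁²`. -/

theorem integral_Icc_exp_I_int_mul (n : ℤ) :
    ∫ t in Set.Icc (0 : ℝ) (2 * π), Complex.exp (Complex.I * n * t) =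
      if n = 0 then ((2 * π : ℝ) : ℂ) else 0 := by
  rw [integral_Icc_eq_integral_Ioc, ← intervalIntegral.integral_of_le two_pi_pos.le]
  split_ifs with hn
  · simp [hn]
  · have hI : Complex.I * n ≠ 0 := by simp [hn]
    have hperiod : Complex.exp (Complex.I * n * (2 * π : ℝ)) = 1 := by
      rw [show Complex.I * n * ((2 * π : ℝ) : ℂ) = n * (2 * π * Complex.I) by push_cast; ring]
      exact Complex.exp_int_mul_two_pi_mul_I n
    push_cast at hperiod
    simp [integral_exp_mul_complex hI, hperiod]

theorem setIntegral_univ_pi_prod {ι 𝕜 E : Type*} [Fintype ι] [RCLike 𝕜] [MeasureSpace E]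
    [SigmaFinite (volume : Measure E)] (s : ι → Set E) (f : ι → E → 𝕜) :
    ∫ φ in Set.univ.pi s, ∏ i, f i (φ i) = ∏ i, ∫ t in s i, f i t := by
  rw [volume_pi, Measure.restrict_pi_pi, integral_fintype_prod_eq_prod]

theorem setIntegral_torus_exp_I_sum_mul {ι : Type*} [Fintype ι] (c : ι → ℤ) :
    ∫ φ in Set.univ.pi (fun _ : ι => Set.Icc (0 : ℝ) (2 * π)),
        Complex.exp (Complex.I * ∑ m, (c m : ℂ) * φ m) =
      if c = 0 then ((2 * π : ℝ) : ℂ) ^ Fintype.card ι else 0 := by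
  simp_rw [Finset.mul_sum, Complex.exp_sum, ← mul_assoc]
  rw [setIntegral_univ_pi_prod _ fun m (t : ℝ) => Complex.exp (Complex.I * c m * t)]
  simp_rw [integral_Icc_exp_I_int_mul, Fintype.prod_ite_zero, funext_iff, Pi.zero_apply,
    Finset.prod_const, Finset.card_univ]

theorem sum_single_add_single_sub_single_sub_single_mul {ι R : Type*} [Fintype ι]
    [DecidableEq ι] [CommRing R] (i j k l : ι) (φ : ι → R) :
    ∑ m, ((Pi.single i 1 + Pi.single j 1 - Pi.single k 1 - Pi.single l 1 : ι → ℤ) m : R) *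
        φ m = φ i + φ j - φ k - φ l := by
  simp [Pi.single_apply, add_mul, sub_mul, Finset.sum_add_distrib, Finset.sum_sub_distrib]

theorem single_add_single_sub_single_sub_single_eq_zero_iff {ι : Type*} [DecidableEq ι]
    {i j k l : ι} :
    (Pi.single i 1 + Pi.single j 1 - Pi.single k 1 - Pi.single l 1 : ι → ℤ) = 0 ↔
      (i = k ∧ j = l) ∨ (i = l ∧ j = k) := by
  rw [sub_sub, sub_eq_zero, Pi.single_add_single_eq_single_add_single one_ne_zero one_ne_zero]
  simp

theorem ite_and_add_ite_and_sub_ite_and_eq_ite_or {α R : Type*} [DecidableEq α] [Ring R]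
    (i j k l : α) :
    ((if i = k ∧ j = l then 1 else 0) + (if i = l ∧ j = k then 1 else 0)
        - (if i = j ∧ j = k ∧ k = l then 1 else 0) : R) =
      if (i = k ∧ j = l) ∨ (i = l ∧ j = k) then 1 else 0 := by
  by_cases hik : i = k <;> by_cases hjl : j = l <;> by_cases hil : i = l <;>
    by_cases hjk : j = k <;> simp_all

theorem integral_Ix_tensor_square_general {d : ℕ} (x : Fin d → ℝ)
    (hx : ∀ i, 0 ≤ x i) (i j k l : Fin d) :
    (1 / (2 * π) ^ d : ℂ) *
      ∫ φ in Set.univ.pi (fun _ : Fin d => Set.Icc (0 : ℝ) (2 * π)),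
        ((Real.sqrt (x i / ∑ m, x m) * Real.sqrt (x j / ∑ m, x m) *
          Real.sqrt (x k / ∑ m, x m) * Real.sqrt (x l / ∑ m, x m) : ℝ) : ℂ) *
        Complex.exp (Complex.I *
          ((φ i : ℂ) + (φ j : ℂ) - (φ k : ℂ) - (φ l : ℂ))) =
    ((x i * x j / (∑ m, x m) ^ 2 : ℝ) : ℂ) *
      ((if i = k ∧ j = l then 1 else 0) + (if i = l ∧ j = k then 1 else 0)
        - (if i = j ∧ j = k ∧ k = l then 1 else 0) : ℂ) := by
  set L := ∑ m, x m
  have hphase (φ : Fin d → ℝ) := sum_single_add_single_sub_single_sub_single_mul i j k l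
    fun m => (φ m : ℂ)
  simp_rw [← hphase, integral_const_mul, setIntegral_torus_exp_I_sum_mul,
    single_add_single_sub_single_sub_single_eq_zero_iff,
    ite_and_add_ite_and_sub_ite_and_eq_ite_or, Fintype.card_fin]
  split_ifs with hpair
  · have hsqrt : ∀ m, √(x m / L) * √(x m / L) = x m / L := fun m =>
      mul_self_sqrt (div_nonneg (hx m) (Finset.sum_nonneg fun m _ => hx m))
    have hprod : √(x i / L) * √(x j / L) * √(x k / L) * √(x l / L) = x i * x j / L ^ 2 := by
      rcases hpair with ⟨rfl, rfl⟩ | ⟨rfl, rfl⟩ <;>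
      calc _ = (√(x i / L) * √(x i / L)) * (√(x j / L) * √(x j / L)) := by ring
        _ = _ := by rw [hsqrt, hsqrt]; ring
    rw [hprod]
    push_cast
    field_simp
  · simp

/-- Entrywise identity for
`(1/(2π)^d) ∫_{[0,2π]^d} (|e_x(φ)⟩⟨e_x(φ)|)^{⊗2} dφ`, where
`e_x(φ) = Σ_j √(x_j/‖x‖₁) e^{𝕚φ_j}|j⟩`: the entry at `((i,j),(k,l))` of the
integrand is `√(x_i/L)√(x_j/L)√(x_k/L)√(x_l/L) · exp(𝕚(φ_i+φ_j−φ_k−φ_l))` with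
`L = ‖x‖₁ = Σ_i x_i`, and the resulting operator equals
`(1/L²)[Σ_i x_i²|ii⟩⟨ii| + Σ_{i<j} 2 x_i x_j |D_ij⟩⟨D_ij|]`, whose entry at
`((i,j),(k,l))` is `(x_i x_j / L²)(δ_{ik}δ_{jl} + δ_{il}δ_{jk} − δ_{i,j,k,l})`.
In particular this operator is a separable quantum state, being a uniform
mixture of the product states `|e_x(φ)⟩⟨e_x(φ)|^{⊗2}`. -/
theorem integral_Ix_tensor_square {d : ℕ} (hd : 1 ≤ d) (x : Fin d → ℝ)
    (hx : ∀ i, 0 ≤ x i) (hx1 : 0 < ∑ i, x i) (i j k l : Fin d) :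
    (1 / (2 * π) ^ d : ℂ) *
      ∫ φ in Set.univ.pi (fun _ : Fin d => Set.Icc (0 : ℝ) (2 * π)),
        ((Real.sqrt (x i / ∑ m, x m) * Real.sqrt (x j / ∑ m, x m) *
          Real.sqrt (x k / ∑ m, x m) * Real.sqrt (x l / ∑ m, x m) : ℝ) : ℂ) *
        Complex.exp (Complex.I *
          ((φ i : ℂ) + (φ j : ℂ) - (φ k : ℂ) - (φ l : ℂ))) =
    ((x i * x j / (∑ m, x m) ^ 2 : ℝ) : ℂ) *
      ((if i = k ∧ j = l then 1 else 0) + (if i = l ∧ j = k then 1 else 0)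
        - (if i = j ∧ j = k ∧ k = l then 1 else 0) : ℂ) :=
  integral_Ix_tensor_square_general x hx i j k l
end

section
/- Let K ≥ 1, Z > 0, α, β the roots of t²−(2+Z)t+1 = 0 with α > β, and f_m = ((α−1)α^m − (β−1)β^m)/(α−β). Set λ_k = f_{K−k} for 0 ≤ k ≤ 2K+1. Then Σ_{k=0}^{2K+1} C(2K+1, k) λ_k = 2(4+Z)^K, where C(n,k) is the binomial coefficient. -/
/-!
Substituting `α^(K-k) = α^K β^k` turns each half of the sum into a binomial expansion:
`Σ C(2K+1,k) α^(K-k) = α^K (1+β)^(2K+1) = (α(1+β)²)^K (1+β)`, and `α(1+β)² = 2 + α + β`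
because `αβ = 1`; symmetrically for `β`. The two halves then combine to
`(2+α+β)^K ((α-1)(1+β) - (β-1)(1+α)) / (α-β) = 2 (2+α+β)^K`, and `α + β = 2 + Z`.
-/

theorem sum_choose_mul_zpow_sub {F : Type*} [Field F] {x : F} (hx : x ≠ 0) (m n : ℕ) :
    ∑ k ∈ Finset.range (n + 1), (n.choose k : F) * x ^ ((m : ℤ) - k) = x ^ m * (x⁻¹ + 1) ^ n := by
  rw [add_pow, Finset.mul_sum]
  refine Finset.sum_congr rfl fun k _ => ?_
  rw [zpow_sub₀ hx, zpow_natCast, zpow_natCast, div_eq_mul_inv, ← inv_pow, one_pow]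
  ring

theorem pow_mul_inv_add_one_pow_two_mul_add_one {F : Type*} [Field F] {x : F} (hx : x ≠ 0)
    (K : ℕ) : x ^ K * (x⁻¹ + 1) ^ (2 * K + 1) = (2 + x + x⁻¹) ^ K * (x⁻¹ + 1) := by
  have hsq : x * (x⁻¹ + 1) ^ 2 = 2 + x + x⁻¹ := by field_simp; ring
  rw [pow_succ, pow_mul, ← mul_assoc, ← mul_pow, hsq]

theorem sum_choose_mul_sub_zpow_div_sub {F : Type*} [Field F] {α β : F} (hαβ : α * β = 1)
    (hne : α ≠ β) (K : ℕ) :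
    ∑ k ∈ Finset.range (2 * K + 2), (Nat.choose (2 * K + 1) k : F) *
      (((α - 1) * α ^ ((K : ℤ) - k) - (β - 1) * β ^ ((K : ℤ) - k)) / (α - β))
      = 2 * (2 + α + β) ^ K := by
  have hα : α ≠ 0 := left_ne_zero_of_mul_eq_one hαβ
  have hβ : β ≠ 0 := right_ne_zero_of_mul_eq_one hαβ
  have hβ_inv : β = α⁻¹ := eq_inv_of_mul_eq_one_right hαβ
  have hα_inv : α = β⁻¹ := eq_inv_of_mul_eq_one_left hαβ
  have hhalf : ∀ x : F, x ≠ 0 → ∑ k ∈ Finset.range (2 * K + 2),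
      (Nat.choose (2 * K + 1) k : F) * ((x - 1) * x ^ ((K : ℤ) - k))
      = (x - 1) * ((2 + x + x⁻¹) ^ K * (x⁻¹ + 1)) := fun x hx => by
    rw [← pow_mul_inv_add_one_pow_two_mul_add_one hx, ← sum_choose_mul_zpow_sub hx,
      Finset.mul_sum]
    exact Finset.sum_congr rfl fun k _ => by ring
  simp only [mul_div_assoc', mul_sub, ← Finset.sum_div, Finset.sum_sub_distrib]
  rw [hhalf α hα, hhalf β hβ, ← hβ_inv, ← hα_inv,
    div_eq_iff (sub_ne_zero.mpr hne)]
  ring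

theorem trace_of_rho_general (K : ℕ) (Z : ℝ) (hZ : 0 < Z) (α β : ℝ)
    (hα : α = (2 + Z + Real.sqrt (Z * (4 + Z))) / 2)
    (hβ : β = (2 + Z - Real.sqrt (Z * (4 + Z))) / 2)
    (f : ℤ → ℝ)
    (hf : ∀ m : ℤ, f m = ((α - 1) * α ^ m - (β - 1) * β ^ m) / (α - β)) :
    ∑ k ∈ Finset.range (2 * K + 2),
      (Nat.choose (2 * K + 1) k : ℝ) * f ((K : ℤ) - (k : ℤ)) = 2 * (4 + Z) ^ K := by
  have hs : Real.sqrt (Z * (4 + Z)) ^ 2 = Z * (4 + Z) := Real.sq_sqrt (by positivity)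
  have hspos : 0 < Real.sqrt (Z * (4 + Z)) := Real.sqrt_pos.mpr (by positivity)
  have hαβ : α * β = 1 := by rw [hα, hβ]; linear_combination -hs / 4
  have hne : α ≠ β := by rw [hα, hβ]; linarith
  have hsum : 2 + α + β = 4 + Z := by rw [hα, hβ]; ring
  simp only [hf]
  rw [sum_choose_mul_sub_zpow_div_sub hαβ hne, hsum]

theorem trace_of_rho (K : ℕ) (hK : 1 ≤ K) (Z : ℝ) (hZ : 0 < Z) (α β : ℝ)
    (hα : α = (2 + Z + Real.sqrt (Z * (4 + Z))) / 2)
    (hβ : β = (2 + Z - Real.sqrt (Z * (4 + Z))) / 2)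
    (f : ℤ → ℝ)
    (hf : ∀ m : ℤ, f m = ((α - 1) * α ^ m - (β - 1) * β ^ m) / (α - β)) :
    ∑ k ∈ Finset.range (2 * K + 2),
      (Nat.choose (2 * K + 1) k : ℝ) * f ((K : ℤ) - (k : ℤ)) = 2 * (4 + Z) ^ K :=
  trace_of_rho_general K Z hZ α β hα hβ f hf
end

section
/- Fix Z > 0, let f_m be defined by f_0 = 1, f_1 = 1+Z, f_{m+2} = (2+Z)f_{m+1} − f_m, and let p, q ≥ 0 be integers. Then the (q+1)×(q+1) Hankel matrix B with entries B_{a,b} = f_{p+a+b} (0 ≤ a,b ≤ q) is positive semidefinite of rank at most 2, admitting the Gram decomposition B_{a,b} = (1/f_p)(f_{p+a} f_{p+b} + √(I_{a,a})·√(I_{b,b})), where I_{a,a} = f_p f_{p+2a} − f_{p+a}² ≥ 0. -/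
/-!
Every solution of `x (n + 2) = c * x (n + 1) - x n` has a constant Casorati determinant
`W = x n * x (n + 2) - x (n + 1) ^ 2`, and more generally
`x p * x (p + a + b) - x (p + a) * x (p + b) = W * u a * u b`, where `u` is the solution with
`u 0 = 0`, `u 1 = 1`: both sides solve the recurrence in `b` and vanish at `b = 0`, and the
same argument in `a` identifies the value at `b = 1`. For `f` we have `W = Z`, and `u ≥ 0`
since `c = 2 + Z ≥ 2`; hence `f p * B a b = f (p + a) * f (p + b) + (√Z u a) (√Z u b)`
exhibits `B` as a Gram matrix of vectors in `ℝ²`.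
-/

open Matrix

namespace LinearRecurrence

section CommRing

variable {R : Type*} [CommRing R]

def vietaRec (c : R) : LinearRecurrence R := ⟨2, ![-1, c]⟩

/-- The Vieta–Fibonacci polynomial `V_n = U_{n-1}(X / 2)` evaluated at `c`. -/
def vietaFib (c : R) : ℕ → R := (vietaRec c).mkSol ![0, 1]

variable {c : R} {x g : ℕ → R}

@[simp] theorem vietaRec_order : (vietaRec c).order = 2 := rfl

theorem isSolution_vietaRec_iff :
    (vietaRec c).IsSolution x ↔ ∀ n, x (n + 2) = c * x (n + 1) - x n := by
  refine forall_congr' fun n => ?_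
  show x (n + 2) = ∑ i : Fin 2, ![-1, c] i * x (n + i) ↔ _
  simp only [Fin.sum_univ_two, Fin.isValue, cons_val_zero, cons_val_one, cons_val_fin_one,
    Fin.val_zero, Fin.val_one, add_zero]
  constructor <;> intro h <;> linear_combination h

theorem IsSolution.shift {E : LinearRecurrence R} {u : ℕ → R} (hu : E.IsSolution u) (k : ℕ) :
    E.IsSolution fun n => u (k + n) := fun n => by
  simpa only [add_assoc] using hu (k + n)

theorem isSolution_vietaFib : (vietaRec c).IsSolution (vietaFib c) := is_sol_mkSol _ _

@[simp] theorem vietaFib_zero : vietaFib c 0 = 0 := mkSol_eq_init (vietaRec c) _ (0 : Fin 2)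

@[simp] theorem vietaFib_one : vietaFib c 1 = 1 := mkSol_eq_init (vietaRec c) _ (1 : Fin 2)

theorem IsSolution.eq_mul_vietaFib (hg : (vietaRec c).IsSolution g) (h0 : g 0 = 0) (n : ℕ) :
    g n = g 1 * vietaFib c n := by
  have hsmul : (vietaRec c).IsSolution (g 1 • vietaFib c) :=
    (vietaRec c).solSpace.smul_mem (g 1) isSolution_vietaFib
  refine congrFun ((eq_iff_eqOn_range_order _ _ _ hg hsmul).2 fun k hk => ?_) n
  obtain rfl | rfl : k = 0 ∨ k = 1 := by
    simp only [vietaRec_order, Finset.coe_range, Set.mem_Iio] at hk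
    omega
  · simp [h0]
  · simp

theorem IsSolution.mul_sub_sq_eq (hx : (vietaRec c).IsSolution x) (n : ℕ) :
    x n * x (n + 2) - x (n + 1) ^ 2 = x 0 * x 2 - x 1 ^ 2 := by
  rw [isSolution_vietaRec_iff] at hx
  induction n with
  | zero => simp
  | succ n ih => linear_combination ih + x (n + 1) * hx (n + 1) - x (n + 2) * hx n

theorem IsSolution.isSolution_mul_sub_mul (hx : (vietaRec c).IsSolution x) (i j k l : ℕ) :
    (vietaRec c).IsSolution fun n => x i * x (j + n) - x k * x (l + n) :=
  show x i • (fun n => x (j + n)) - x k • (fun n => x (l + n)) ∈ (vietaRec c).solSpace from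
  (vietaRec c).solSpace.sub_mem ((vietaRec c).solSpace.smul_mem (x i) (hx.shift j))
    ((vietaRec c).solSpace.smul_mem (x k) (hx.shift l))

theorem IsSolution.mul_sub_mul_eq (hx : (vietaRec c).IsSolution x) (p a b : ℕ) :
    x p * x (p + a + b) - x (p + a) * x (p + b) =
      (x 0 * x 2 - x 1 ^ 2) * vietaFib c a * vietaFib c b := by
  have hrow : x p * x (p + 1 + a) - x (p + 1) * x (p + a) =
      (x 0 * x 2 - x 1 ^ 2) * vietaFib c a := by
    rw [(hx.isSolution_mul_sub_mul p (p + 1) (p + 1) p).eq_mul_vietaFib (by simp [mul_comm]) a,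
      ← hx.mul_sub_sq_eq p]
    ring_nf
  rw [(hx.isSolution_mul_sub_mul p (p + a) (p + a) p).eq_mul_vietaFib (by simp [mul_comm]) b,
    ← hrow]
  ring_nf

end CommRing

theorem IsSolution.monotone {R : Type*} [CommRing R] [LinearOrder R] [IsStrictOrderedRing R]
    {c : R} {x : ℕ → R} (hx : (vietaRec c).IsSolution x) (hc : 2 ≤ c) (h0 : 0 ≤ x 0)
    (h01 : x 0 ≤ x 1) : Monotone x := by
  rw [isSolution_vietaRec_iff] at hx
  have hstep : ∀ n, 0 ≤ x n ∧ x n ≤ x (n + 1) := by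
    intro n
    induction n with
    | zero => exact ⟨h0, h01⟩
    | succ n ih =>
      have hn1 : 0 ≤ x (n + 1) := ih.1.trans ih.2
      refine ⟨hn1, ?_⟩
      rw [hx n]
      nlinarith [ih.2]
  exact monotone_nat_of_le_succ fun n => (hstep n).2

end LinearRecurrence

theorem Matrix.posSemidef_and_rank_le_two_of_apply_eq {n R : Type*} [Fintype n] [Field R]
    [PartialOrder R] [StarRing R] [StarOrderedRing R] {B : Matrix n n R} (v w : n → R)
    (hB : ∀ a b, B a b = star (v a) * v b + star (w a) * w b) : B.PosSemidef ∧ B.rank ≤ 2 := by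
  set A : Matrix (Fin 2) n R := Matrix.of ![v, w]
  have hBA : B = Aᴴ * A := by
    ext a b
    simp [A, Matrix.mul_apply, Fin.sum_univ_two, hB]
  subst hBA
  refine ⟨posSemidef_conjTranspose_mul_self A, ?_⟩
  calc (Aᴴ * A).rank ≤ A.rank := rank_mul_le_right _ _
    _ ≤ 2 := by simpa using A.rank_le_card_height

open LinearRecurrence

theorem hankel_block_psd_rank_two (Z : ℝ) (hZ : 0 < Z) (f : ℕ → ℝ)
    (hf0 : f 0 = 1) (hf1 : f 1 = 1 + Z)
    (hrec : ∀ m : ℕ, f (m + 2) = (2 + Z) * f (m + 1) - f m)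
    (p q : ℕ) (B : Matrix (Fin (q + 1)) (Fin (q + 1)) ℝ)
    (hB : ∀ a b : Fin (q + 1), B a b = f (p + a + b)) :
    B.PosSemidef ∧ B.rank ≤ 2 ∧
    (∀ a : Fin (q + 1), 0 ≤ f p * f (p + 2 * a) - f (p + a) ^ 2) ∧
    (∀ a b : Fin (q + 1),
      B a b = (1 / f p) * (f (p + a) * f (p + b) +
        Real.sqrt (f p * f (p + 2 * a) - f (p + a) ^ 2) *
        Real.sqrt (f p * f (p + 2 * b) - f (p + b) ^ 2))) := by
  have hf : (vietaRec (2 + Z)).IsSolution f := isSolution_vietaRec_iff.2 hrec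
  have hc : (2 : ℝ) ≤ 2 + Z := by linarith
  have hfp : 0 < f p := by
    have := hf.monotone hc (by simp [hf0]) (by simp [hf0, hf1, hZ.le]) (Nat.zero_le p)
    linarith
  have hu (a : ℕ) : 0 ≤ vietaFib (2 + Z) a := by
    simpa using isSolution_vietaFib.monotone hc (by simp) (by simp) (Nat.zero_le a)
  have hI (a b : ℕ) : f p * f (p + a + b) - f (p + a) * f (p + b) =
      Z * vietaFib (2 + Z) a * vietaFib (2 + Z) b := by
    rw [hf.mul_sub_mul_eq, hrec 0, hf0, hf1]
    ring
  have hIdiag (a : ℕ) : f p * f (p + 2 * a) - f (p + a) ^ 2 =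
      Z * vietaFib (2 + Z) a * vietaFib (2 + Z) a := by
    rw [two_mul, ← add_assoc, sq, hI]
  have hsqrt (a : ℕ) : Real.sqrt (f p * f (p + 2 * a) - f (p + a) ^ 2) =
      Real.sqrt Z * vietaFib (2 + Z) a := by
    rw [hIdiag, mul_assoc, Real.sqrt_mul hZ.le, Real.sqrt_mul_self (hu a)]
  have hGram (a b : Fin (q + 1)) : B a b = (1 / f p) * (f (p + a) * f (p + b) +
      Real.sqrt (f p * f (p + 2 * a) - f (p + a) ^ 2) *
      Real.sqrt (f p * f (p + 2 * b) - f (p + b) ^ 2)) := by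
    rw [hB, hsqrt, hsqrt]
    field_simp
    linear_combination
      hI a b - vietaFib (2 + Z) a * vietaFib (2 + Z) b * Real.mul_self_sqrt hZ.le
  obtain ⟨hpsd, hrank⟩ := Matrix.posSemidef_and_rank_le_two_of_apply_eq (B := B)
    (fun a => f (p + a) / Real.sqrt (f p))
    (fun a => Real.sqrt (f p * f (p + 2 * a) - f (p + a) ^ 2) / Real.sqrt (f p)) fun a b => by
      rw [hGram, star_trivial, star_trivial, div_mul_div_comm, div_mul_div_comm,
        Real.mul_self_sqrt hfp.le]
      ring
  refine ⟨hpsd, hrank, fun a => ?_, hGram⟩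
  rw [hIdiag]
  exact mul_nonneg (mul_nonneg hZ.le (hu a)) (hu a)
end
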